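/- arXiv:2009.05568 — 4 statements merged into one kernel-verified Lean document; each statement's English description precedes it below -/
import Mathlib

section
/- Let W(u,v,z) = (z + z⁻¹)(u + u⁻¹ + v + v⁻¹) as a function on (ℂ^×)³. Then (u,v,z) is a critical point of W if and only if either (a) z² = −1 and u + u⁻¹ + v + v⁻¹ = 0, or (b) u² = v² = 1 and u = −v, or (c) u² = v² = 1, u = v, and z² = 1. Moreover, the set of critical values of W is exactly {0, 8, −8}. -/
/-- The genus-2 necklace graph potential in the coordinates `u, v, z`. -/
noncomputable def W2 (u v z : ℂ) : ℂ := (z + z⁻¹) * (u + u⁻¹ + v + v⁻¹)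

/-- `(u,v,z)` is a critical point of `W2`: all three partial derivatives vanish. -/
def IsCritW2 (u v z : ℂ) : Prop :=
  deriv (fun t => W2 t v z) u = 0 ∧
  deriv (fun t => W2 u t z) v = 0 ∧
  deriv (fun t => W2 u v t) z = 0

lemma crit_iff (u v z : ℂ) (hu : u ≠ 0) (hv : v ≠ 0) (hz : z ≠ 0) :
    IsCritW2 u v z ↔
      ((z + z⁻¹) * (1 + -(u^2)⁻¹) = 0 ∧ (z + z⁻¹) * (1 + -(v^2)⁻¹) = 0 ∧
        (1 + -(z^2)⁻¹) * (u + u⁻¹ + v + v⁻¹) = 0) := by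
  have h1 : HasDerivAt (fun t : ℂ => W2 t v z) ((z + z⁻¹) * (1 + -(u^2)⁻¹)) u := by
    simpa [W2] using
      ((((hasDerivAt_id u).add (hasDerivAt_inv hu)).add_const v).add_const v⁻¹).const_mul
        (z + z⁻¹)
  have h2 : HasDerivAt (fun t : ℂ => W2 u t z) ((z + z⁻¹) * (1 + -(v^2)⁻¹)) v := by
    simpa [W2, add_assoc] using
      (((hasDerivAt_id v).const_add (u + u⁻¹)).add (hasDerivAt_inv hv)).const_mul (z + z⁻¹)
  have h3 : HasDerivAt (fun t : ℂ => W2 u v t)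
      ((1 + -(z^2)⁻¹) * (u + u⁻¹ + v + v⁻¹)) z := by
    simpa [W2] using
      ((hasDerivAt_id z).add (hasDerivAt_inv hz)).mul_const (u + u⁻¹ + v + v⁻¹)
  rw [IsCritW2, h1.deriv, h2.deriv, h3.deriv]

/-- Description of the critical points and critical values of the genus-2
necklace graph potential. -/
theorem genus_two_critical_points :
    (∀ u v z : ℂ, u ≠ 0 → v ≠ 0 → z ≠ 0 →
      (IsCritW2 u v z ↔
        (z^2 = -1 ∧ u + u⁻¹ + v + v⁻¹ = 0) ∨
        (u^2 = 1 ∧ v^2 = 1 ∧ u = -v) ∨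
        (u^2 = 1 ∧ v^2 = 1 ∧ u = v ∧ z^2 = 1))) ∧
    {c : ℂ | ∃ u v z : ℂ, u ≠ 0 ∧ v ≠ 0 ∧ z ≠ 0 ∧ IsCritW2 u v z ∧ W2 u v z = c} =
      {0, 8, -8} := by
  have key : ∀ u v z : ℂ, u ≠ 0 → v ≠ 0 → z ≠ 0 →
      (IsCritW2 u v z ↔
        (z^2 = -1 ∧ u + u⁻¹ + v + v⁻¹ = 0) ∨
        (u^2 = 1 ∧ v^2 = 1 ∧ u = -v) ∨
        (u^2 = 1 ∧ v^2 = 1 ∧ u = v ∧ z^2 = 1)) := by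
    intro u v z hu hv hz
    rw [crit_iff u v z hu hv hz]
    have hu2 : (u:ℂ)^2 ≠ 0 := pow_ne_zero _ hu
    have hv2 : (v:ℂ)^2 ≠ 0 := pow_ne_zero _ hv
    have hz2 : (z:ℂ)^2 ≠ 0 := pow_ne_zero _ hz
    constructor
    · rintro ⟨e1, e2, e3⟩
      by_cases hA : z + z⁻¹ = 0
      · -- z² = -1 branch
        have hzsq : z^2 = -1 := by
          field_simp at hA; linear_combination hA
        have hzi : (z^2)⁻¹ = -1 := by rw [hzsq]; norm_num
        rw [hzi] at e3
        left
        refine ⟨hzsq, ?_⟩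
        have : (1 + -(-1 : ℂ)) = 2 := by norm_num
        rw [this] at e3
        exact (mul_eq_zero.1 e3).resolve_left (by norm_num)
      · have hB1 : 1 + -(u^2)⁻¹ = 0 := (mul_eq_zero.1 e1).resolve_left hA
        have hB2 : 1 + -(v^2)⁻¹ = 0 := (mul_eq_zero.1 e2).resolve_left hA
        have hu1 : u^2 = 1 := by field_simp at hB1; linear_combination hB1
        have hv1 : v^2 = 1 := by field_simp at hB2; linear_combination hB2
        have huu : u⁻¹ = u := inv_eq_of_mul_eq_one_right (by linear_combination hu1)
        have hvv : v⁻¹ = v := inv_eq_of_mul_eq_one_right (by linear_combination hv1)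
        have hcase : (u - v) * (u + v) = 0 := by linear_combination hu1 - hv1
        rcases mul_eq_zero.1 hcase with h | h
        · -- u = v
          have huv : u = v := by linear_combination h
          have hS : u + u⁻¹ + v + v⁻¹ = 4 * u := by rw [huu, hvv, huv]; ring
          rw [hS] at e3
          have h4u : (4 : ℂ) * u ≠ 0 := by
            simp [hu]
          have hC : 1 + -(z^2)⁻¹ = 0 := (mul_eq_zero.1 e3).resolve_right h4u
          have hz1 : z^2 = 1 := by field_simp at hC; linear_combination hC
          exact Or.inr (Or.inr ⟨hu1, hv1, huv, hz1⟩)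
        · exact Or.inr (Or.inl ⟨hu1, hv1, by linear_combination h⟩)
    · rintro (⟨hzsq, hS⟩ | ⟨hu1, hv1, huv⟩ | ⟨hu1, hv1, huv, hz1⟩)
      · have hA : z + z⁻¹ = 0 := by
          field_simp; linear_combination hzsq
        exact ⟨by rw [hA, zero_mul], by rw [hA, zero_mul], by rw [hS, mul_zero]⟩
      · have huu : u⁻¹ = u := inv_eq_of_mul_eq_one_right (by linear_combination hu1)
        have hvv : v⁻¹ = v := inv_eq_of_mul_eq_one_right (by linear_combination hv1)
        have hB1 : 1 + -(u^2)⁻¹ = 0 := by rw [hu1]; norm_num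
        have hB2 : 1 + -(v^2)⁻¹ = 0 := by rw [hv1]; norm_num
        have hS : u + u⁻¹ + v + v⁻¹ = 0 := by rw [huu, hvv, huv]; ring
        exact ⟨by rw [hB1, mul_zero], by rw [hB2, mul_zero], by rw [hS, mul_zero]⟩
      · have hB1 : 1 + -(u^2)⁻¹ = 0 := by rw [hu1]; norm_num
        have hB2 : 1 + -(v^2)⁻¹ = 0 := by rw [hv1]; norm_num
        have hC : 1 + -(z^2)⁻¹ = 0 := by rw [hz1]; norm_num
        exact ⟨by rw [hB1, mul_zero], by rw [hB2, mul_zero], by rw [hC, zero_mul]⟩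
  refine ⟨key, ?_⟩
  ext c
  simp only [Set.mem_setOf_eq, Set.mem_insert_iff, Set.mem_singleton_iff]
  constructor
  · rintro ⟨u, v, z, hu, hv, hz, hcrit, hval⟩
    rcases (key u v z hu hv hz).1 hcrit with ⟨hzsq, hS⟩ | ⟨hu1, hv1, huv⟩ | ⟨hu1, hv1, huv, hz1⟩
    · left; rw [← hval, W2, hS, mul_zero]
    · left
      have huu : u⁻¹ = u := inv_eq_of_mul_eq_one_right (by linear_combination hu1)
      have hvv : v⁻¹ = v := inv_eq_of_mul_eq_one_right (by linear_combination hv1)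
      rw [← hval, W2, huu, hvv, huv]; ring
    · have huu : u⁻¹ = u := inv_eq_of_mul_eq_one_right (by linear_combination hu1)
      have hvv : v⁻¹ = v := inv_eq_of_mul_eq_one_right (by linear_combination hv1)
      have hzz : z⁻¹ = z := inv_eq_of_mul_eq_one_right (by linear_combination hz1)
      have hW : c = 8 * z * u := by
        rw [← hval, W2, huu, hvv, hzz, ← huv]; ring
      have hcu : (u - 1) * (u + 1) = 0 := by linear_combination hu1
      have hcz : (z - 1) * (z + 1) = 0 := by linear_combination hz1
      rcases mul_eq_zero.1 hcu with h1 | h1 <;> rcases mul_eq_zero.1 hcz with h2 | h2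
      · right; left; rw [hW]; linear_combination 8 * z * h1 + 8 * h2
      · right; right; rw [hW]; linear_combination 8 * z * h1 + 8 * h2
      · right; right; rw [hW]; linear_combination 8 * z * h1 - 8 * h2
      · right; left; rw [hW]; linear_combination 8 * z * h1 - 8 * h2
  · rintro (rfl | rfl | rfl)
    · exact ⟨1, -1, 1, one_ne_zero, by norm_num, one_ne_zero,
        (key 1 (-1) 1 one_ne_zero (by norm_num) one_ne_zero).2
          (Or.inr (Or.inl (by norm_num))), by norm_num [W2]⟩
    · exact ⟨1, 1, 1, one_ne_zero, one_ne_zero, one_ne_zero,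
        (key 1 1 1 one_ne_zero one_ne_zero one_ne_zero).2
          (Or.inr (Or.inr (by norm_num))), by norm_num [W2]⟩
    · exact ⟨1, 1, -1, one_ne_zero, one_ne_zero, by norm_num,
        (key 1 1 (-1) one_ne_zero one_ne_zero (by norm_num)).2
          (Or.inr (Or.inr (by norm_num))), by norm_num [W2]⟩
end

section
/- Fix g ≥ 2 and signs ε₁, …, ε_{g−1} ∈ {1, −1}, exactly k of which equal −1. Define a point of (ℂ^×)^{3g−3} in the coordinates (u₁,…,u_{g−1}, v₁,…,v_{g−1}, z₁,…,z_{g−1}) by u_i = v_i = ε_i and z_i = 1 for all i. Then this point is a critical point of the genus-g necklace graph potential W_g, and W_g takes the value 8(g−1) − 16k there. -/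
/-! Since `J⁺' x = 1 - x⁻²` vanishes at `x = ±1`, every `u`- and `v`-partial of `W_g` vanishes
wherever that coordinate is `±1`. On the diagonal `u = v` the coefficients of `z_i` and `z_i⁻¹`
coincide, so `W_g = ∑ J⁺(z_i) · (…)` and the `z`-partials vanish at `z_i = ±1` as well. At `z = 1`
each `J⁺(ε_i) = 2 ε_i` occurs four times (two adjacent edges, each through `z_i` and `z_i⁻¹`),
so `W_g = 8 ∑ ε_i = 8 ((g - 1) - 2k)`. -/

open Finset

/-- `J⁺(x) = x + x⁻¹`. -/
noncomputable def Jp (x : ℂ) : ℂ := x + x⁻¹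

/-- The genus-`g` necklace graph potential (one colored vertex) in the
coordinates `u i, v i, z i` for `i = 1, …, g-1`. -/
noncomputable def necklace (g : ℕ) (u v z : ℕ → ℂ) : ℂ :=
  z 1 * (Jp (v (g-1)) + Jp (u 1)) + (z 1)⁻¹ * (Jp (u (g-1)) + Jp (v 1)) +
    ∑ i ∈ Finset.Icc 2 (g-1),
      (z i * (Jp (u (i-1)) + Jp (u i)) + (z i)⁻¹ * (Jp (v (i-1)) + Jp (v i)))

/-- A point of the torus is a critical point of the necklace graph potential
if all partial derivatives vanish there. -/
def IsCritNecklace (g : ℕ) (u v z : ℕ → ℂ) : Prop :=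
  ∀ i ∈ Finset.Icc 1 (g-1),
    deriv (fun t => necklace g (Function.update u i t) v z) (u i) = 0 ∧
    deriv (fun t => necklace g u (Function.update v i t) z) (v i) = 0 ∧
    deriv (fun t => necklace g u v (Function.update z i t)) (z i) = 0

open Function

theorem HasDerivAt.comp_update_apply {𝕜 F ι : Type*} [NontriviallyNormedField 𝕜]
    [NormedAddCommGroup F] [NormedSpace 𝕜 F] [DecidableEq ι] {f : 𝕜 → F} {c : 𝕜}
    (hf : HasDerivAt f 0 c) (u : ι → 𝕜) (i j : ι) :
    HasDerivAt (fun t => f (update u i t j)) 0 c := by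
  rcases eq_or_ne j i with rfl | hji
  · simpa using hf
  · simpa [update_of_ne hji] using hasDerivAt_const c (f (u j))

theorem hasDerivAt_Jp {c : ℂ} (hc : c ≠ 0) : HasDerivAt Jp (1 - (c ^ 2)⁻¹) c := by
  rw [sub_eq_add_neg]
  exact (hasDerivAt_id' c).fun_add (hasDerivAt_inv hc)

theorem hasDerivAt_Jp_of_mul_self_eq_one {c : ℂ} (hc : c * c = 1) : HasDerivAt Jp 0 c := by
  have hc0 : c ≠ 0 := left_ne_zero_of_mul_eq_one hc
  simpa [sq, hc] using hasDerivAt_Jp hc0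

theorem Jp_eq_two_mul {c : ℂ} (hc : c = 1 ∨ c = -1) : Jp c = 2 * c := by
  rcases hc with rfl | rfl <;> norm_num [Jp]

theorem necklace_swap (g : ℕ) (u v z : ℕ → ℂ) : necklace g v u z⁻¹ = necklace g u v z := by
  simp only [necklace, Pi.inv_apply, inv_inv]
  congr 1
  · ring
  · exact sum_congr rfl fun _ _ => add_comm _ _

theorem necklace_diag (g : ℕ) (u z : ℕ → ℂ) :
    necklace g u u z = Jp (z 1) * (Jp (u (g-1)) + Jp (u 1)) +
      ∑ j ∈ Icc 2 (g-1), Jp (z j) * (Jp (u (j-1)) + Jp (u j)) := by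
  simp only [necklace]
  congr 1
  · simp only [Jp]; ring
  · exact sum_congr rfl fun _ _ => by simp only [Jp]; ring

theorem hasDerivAt_necklace_update_left (g : ℕ) (u v z : ℕ → ℂ) {i : ℕ} (hu : u i * u i = 1) :
    HasDerivAt (fun t => necklace g (update u i t) v z) 0 (u i) := by
  have hJ (j : ℕ) := (hasDerivAt_Jp_of_mul_self_eq_one hu).comp_update_apply u i j
  have h : HasDerivAt (fun t => necklace g (update u i t) v z) (z 1 * (0 + 0) +
      (z 1)⁻¹ * (0 + 0) + ∑ j ∈ Icc 2 (g-1), (z j * (0 + 0) + (z j)⁻¹ * 0)) (u i) :=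
    ((((hasDerivAt_const _ _).add (hJ 1)).const_mul (z 1)).add
      (((hJ (g-1)).add (hasDerivAt_const _ _)).const_mul (z 1)⁻¹)).add
    (HasDerivAt.fun_sum fun j _ => (((hJ (j-1)).add (hJ j)).const_mul (z j)).add
      ((hasDerivAt_const _ _).const_mul (z j)⁻¹))
  simpa using h

theorem hasDerivAt_necklace_update_right (g : ℕ) (u v z : ℕ → ℂ) {i : ℕ} (hv : v i * v i = 1) :
    HasDerivAt (fun t => necklace g u (update v i t) z) 0 (v i) := by
  simpa only [necklace_swap] using hasDerivAt_necklace_update_left g v u z⁻¹ hv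

theorem hasDerivAt_necklace_diag_update (g : ℕ) (u z : ℕ → ℂ) {i : ℕ} (hz : z i * z i = 1) :
    HasDerivAt (fun t => necklace g u u (update z i t)) 0 (z i) := by
  have hJ (j : ℕ) := (hasDerivAt_Jp_of_mul_self_eq_one hz).comp_update_apply z i j
  have h : HasDerivAt (fun t => necklace g u u (update z i t))
      (0 * (Jp (u (g-1)) + Jp (u 1)) + ∑ j ∈ Icc 2 (g-1), 0 * (Jp (u (j-1)) + Jp (u j))) (z i) := by
    simp only [necklace_diag]
    exact ((hJ 1).mul_const _).add (HasDerivAt.fun_sum fun j _ => (hJ j).mul_const _)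
  simpa using h

theorem sum_Icc_cyclic_pairs {M : Type*} [AddCommMonoid M] (f : ℕ → M) (n : ℕ) :
    (f (n + 1) + f 1) + ∑ j ∈ Icc 2 (n + 1), (f (j - 1) + f j) =
      2 • ∑ j ∈ Icc 1 (n + 1), f j := by
  induction n with
  | zero => simp [two_nsmul]
  | succ n ih =>
    rw [sum_Icc_succ_top (by omega : 2 ≤ n + 1 + 1), sum_Icc_succ_top (by omega : 1 ≤ n + 1 + 1),
      smul_add, ← ih, two_nsmul]
    simp only [Nat.add_sub_cancel]
    abel

theorem sum_eq_card_sub_two_mul_card_filter {R ι : Type*} [Ring R] [DecidableEq R] (s : Finset ι)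
    (ε : ι → R) (hε : ∀ i ∈ s, ε i = 1 ∨ ε i = -1) :
    ∑ i ∈ s, ε i = s.card - 2 * (s.filter (fun i => ε i = -1)).card := by
  have hpt : ∀ i ∈ s, ε i = 1 - 2 * if ε i = -1 then 1 else 0 := by
    intro i hi
    by_cases h : ε i = -1
    · rw [if_pos h, h]; norm_num
    · rw [if_neg h, (hε i hi).resolve_right h]; simp
  rw [sum_congr rfl hpt, sum_sub_distrib, ← mul_sum, sum_boole]
  simp

theorem necklace_diag_one {g : ℕ} (hg : 2 ≤ g) (u : ℕ → ℂ) :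
    necklace g u u (fun _ => 1) = 4 * ∑ j ∈ Icc 1 (g-1), Jp (u j) := by
  obtain ⟨n, rfl⟩ : ∃ n, g = n + 2 := ⟨g - 2, by omega⟩
  have hJ1 : Jp 1 = 2 := by norm_num [Jp]
  have hcyc := sum_Icc_cyclic_pairs (fun j => Jp (u j)) n
  simp only [necklace_diag, hJ1, ← mul_sum, ← mul_add, show n + 2 - 1 = n + 1 from rfl]
  rw [hcyc, two_nsmul]
  ring

/-- Sign choices `u_i = v_i = ε_i = ±1`, `z_i = 1` give critical points of the
necklace graph potential with value `8(g-1) - 16k`, where `k` is the number of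
negative signs. -/
theorem necklace_sign_critical_points (g k : ℕ) (hg : 2 ≤ g) (ε : ℕ → ℂ)
    (hε : ∀ i ∈ Finset.Icc 1 (g-1), ε i = 1 ∨ ε i = -1)
    (hk : ((Finset.Icc 1 (g-1)).filter (fun i => ε i = -1)).card = k) :
    IsCritNecklace g ε ε (fun _ => 1) ∧
    necklace g ε ε (fun _ => 1) = 8*((g : ℂ) - 1) - 16*(k : ℂ) := by
  refine ⟨fun i hi => ?_, ?_⟩
  · have hεi : ε i * ε i = 1 := by rcases hε i hi with h | h <;> simp [h]
    exact ⟨(hasDerivAt_necklace_update_left g ε ε _ hεi).deriv,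
      (hasDerivAt_necklace_update_right g ε ε _ hεi).deriv,
      (hasDerivAt_necklace_diag_update g ε _ (mul_one 1)).deriv⟩
  · rw [necklace_diag_one hg, sum_congr rfl fun i hi => Jp_eq_two_mul (hε i hi), ← mul_sum,
      sum_eq_card_sub_two_mul_card_filter _ _ hε, hk, Nat.card_Icc, add_tsub_cancel_right, Nat.cast_sub (by omega : 1 ≤ g), Nat.cast_one]
    ring
end

section
/- For every g ≥ 2, the point (1, 1, …, 1) ∈ (ℂ^×)^{3g−3} is a critical point of the genus-g necklace graph potential W_g, and W_g(1,…,1) = 8g − 8. -/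
open Finset

/-! The coordinates `u i`, `v i` enter `necklace` only through `J⁺`, which is critical at `1`;
with `u = v = 1` the potential becomes `4 ∑ J⁺(z i)`, so the same holds for the `z i`. -/

lemma Jp_one : Jp 1 = 2 := by
  norm_num [Jp]

lemma hasDerivAt_Jp_one : HasDerivAt Jp 0 1 := by
  have h := (hasDerivAt_id (1 : ℂ)).add (hasDerivAt_inv one_ne_zero)
  norm_num at h
  exact h

lemma hasDerivAt_Jp_update_apply {ι : Type*} [DecidableEq ι] (c : ι → ℂ) (i j : ι) :
    HasDerivAt (fun t => Jp (Function.update c i t j)) 0 1 := by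
  rcases eq_or_ne j i with rfl | hji
  · simpa only [Function.update_self] using hasDerivAt_Jp_one
  · simpa only [Function.update_of_ne hji] using hasDerivAt_const (1 : ℂ) (Jp (c j))

lemma hasDerivAt_necklace_of_hasDerivAt_Jp (g : ℕ) {U V : ℂ → ℕ → ℂ} (z : ℕ → ℂ) {x : ℂ}
    (hU : ∀ j, HasDerivAt (fun t => Jp (U t j)) 0 x)
    (hV : ∀ j, HasDerivAt (fun t => Jp (V t j)) 0 x) :
    HasDerivAt (fun t => necklace g (U t) (V t) z) 0 x := by
  have h := ((((hV (g-1)).fun_add (hU 1)).const_mul (z 1)).fun_add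
      (((hU (g-1)).fun_add (hV 1)).const_mul (z 1)⁻¹)).fun_add
    (HasDerivAt.fun_sum (u := Icc 2 (g-1)) fun j _ =>
      (((hU (j-1)).fun_add (hU j)).const_mul (z j)).fun_add
        (((hV (j-1)).fun_add (hV j)).const_mul (z j)⁻¹))
  simpa only [necklace, add_zero, mul_zero, sum_const_zero] using h

lemma hasDerivAt_necklace_update_u (g i : ℕ) (u v z : ℕ → ℂ) :
    HasDerivAt (fun t => necklace g (Function.update u i t) v z) 0 1 :=
  hasDerivAt_necklace_of_hasDerivAt_Jp g z (hasDerivAt_Jp_update_apply u i)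
    fun j => hasDerivAt_const 1 (Jp (v j))

lemma hasDerivAt_necklace_update_v (g i : ℕ) (u v z : ℕ → ℂ) :
    HasDerivAt (fun t => necklace g u (Function.update v i t) z) 0 1 :=
  hasDerivAt_necklace_of_hasDerivAt_Jp g z (fun j => hasDerivAt_const 1 (Jp (u j)))
    (hasDerivAt_Jp_update_apply v i)

lemma necklace_one_one (g : ℕ) (z : ℕ → ℂ) :
    necklace g (fun _ => 1) (fun _ => 1) z = 4 * (Jp (z 1) + ∑ i ∈ Icc 2 (g-1), Jp (z i)) := by
  simp only [necklace, Jp_one, mul_add (4 : ℂ), mul_sum]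
  congr 1
  · simp only [Jp]
    ring
  · exact sum_congr rfl fun i _ => by simp only [Jp]; ring

lemma hasDerivAt_necklace_one_one_update_z (g i : ℕ) (z : ℕ → ℂ) :
    HasDerivAt (fun t => necklace g (fun _ => 1) (fun _ => 1) (Function.update z i t)) 0 1 := by
  have hJ := hasDerivAt_Jp_update_apply z i
  have h := ((hJ 1).fun_add (HasDerivAt.fun_sum (u := Icc 2 (g-1)) fun j _ => hJ j)).const_mul 4
  simpa only [necklace_one_one, sum_const_zero, add_zero, mul_zero] using h

/-- The point `(1,…,1)` is a critical point of the genus-`g` necklace graph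
potential, with value `8g - 8` (the conifold point). -/
theorem necklace_conifold_point (g : ℕ) (hg : 2 ≤ g) :
    IsCritNecklace g (fun _ => 1) (fun _ => 1) (fun _ => 1) ∧
    necklace g (fun _ => 1) (fun _ => 1) (fun _ => 1) = 8*(g : ℂ) - 8 := by
  refine ⟨fun i _ => ⟨(hasDerivAt_necklace_update_u g i _ _ _).deriv,
    (hasDerivAt_necklace_update_v g i _ _ _).deriv,
    (hasDerivAt_necklace_one_one_update_z g i _).deriv⟩, ?_⟩
  have hcard : #(Icc 2 (g-1)) = g - 2 := by
    rw [Nat.card_Icc]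
    omega
  rw [necklace_one_one, sum_const, hcard, nsmul_eq_mul, Jp_one, Nat.cast_sub hg]
  push_cast
  ring
end

section
/- Let W(u,v,z) = (z + z⁻¹)(u + u⁻¹ + v + v⁻¹) on (ℂ^×)³. The critical locus of W over the critical value 0 contains the 1-dimensional family {(u, v, z) : z² = −1, v = −u} (for any u ∈ ℂ^×), while the critical points with critical value ±8 are exactly the four isolated points u = v = ε, z = δ with ε, δ ∈ {±1}, where W = 8εδ; hence the critical locus over value 8 (and over value −8) consists of exactly 2 points each. -/
lemma derivW2_u (v z : ℂ) {u : ℂ} (hu : u ≠ 0) :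
    deriv (fun t => W2 t v z) u = (z + z⁻¹) * (1 - (u ^ 2)⁻¹) := by
  have h : HasDerivAt (fun t : ℂ => (z + z⁻¹) * (t + t⁻¹ + v + v⁻¹))
      ((z + z⁻¹) * (1 + -(u ^ 2)⁻¹)) u :=
    ((((hasDerivAt_id u).add (hasDerivAt_inv hu)).add_const v).add_const v⁻¹).const_mul _
  have h2 := h.deriv
  simp only [W2]
  rw [h2]; ring

lemma derivW2_v (u z : ℂ) {v : ℂ} (hv : v ≠ 0) :
    deriv (fun t => W2 u t z) v = (z + z⁻¹) * (1 - (v ^ 2)⁻¹) := by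
  have h : HasDerivAt (fun t : ℂ => (z + z⁻¹) * (u + u⁻¹ + t + t⁻¹))
      ((z + z⁻¹) * (1 + -(v ^ 2)⁻¹)) v :=
    (((hasDerivAt_id v).const_add (u + u⁻¹)).add (hasDerivAt_inv hv)).const_mul _
  have h2 := h.deriv
  simp only [W2]
  rw [h2]; ring

lemma derivW2_z (u v : ℂ) {z : ℂ} (hz : z ≠ 0) :
    deriv (fun t => W2 u v t) z = (1 - (z ^ 2)⁻¹) * (u + u⁻¹ + v + v⁻¹) := by
  have h : HasDerivAt (fun t : ℂ => (t + t⁻¹) * (u + u⁻¹ + v + v⁻¹))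
      ((1 + -(z ^ 2)⁻¹) * (u + u⁻¹ + v + v⁻¹)) z :=
    ((hasDerivAt_id z).add (hasDerivAt_inv hz)).mul_const _
  have h2 := h.deriv
  simp only [W2]
  rw [h2]; ring

lemma sq_one_cases {u : ℂ} (h : u ^ 2 = 1) : u = 1 ∨ u = -1 := by
  have h2 : (u - 1) * (u + 1) = 0 := by linear_combination h
  rcases mul_eq_zero.mp h2 with h3 | h3
  · left; linear_combination h3
  · right; linear_combination h3

lemma crit_of_pm (ε δ : ℂ) (hε : ε = 1 ∨ ε = -1) (hδ : δ = 1 ∨ δ = -1) :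
    IsCritW2 ε ε δ ∧ W2 ε ε δ = 8 * ε * δ := by
  have hε0 : ε ≠ 0 := by rcases hε with h | h <;> simp [h]
  have hδ0 : δ ≠ 0 := by rcases hδ with h | h <;> simp [h]
  have hε2 : ε ^ 2 = 1 := by rcases hε with h | h <;> norm_num [h]
  have hδ2 : δ ^ 2 = 1 := by rcases hδ with h | h <;> norm_num [h]
  have hεi : ε⁻¹ = ε := by rcases hε with h | h <;> norm_num [h]
  have hδi : δ⁻¹ = δ := by rcases hδ with h | h <;> norm_num [h]
  refine ⟨⟨?_, ?_, ?_⟩, ?_⟩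
  · rw [derivW2_u _ _ hε0, hε2]; norm_num
  · rw [derivW2_v _ _ hε0, hε2]; norm_num
  · rw [derivW2_z _ _ hδ0, hδ2]; norm_num
  · rw [W2, hεi, hδi]; ring

lemma locus_eq (c : ℂ) (a b : ℂ) (hab : ∀ u v z : ℂ, (u = 1 ∨ u = -1) → (v = 1 ∨ v = -1) →
    (z = 1 ∨ z = -1) → W2 u v z = c → (u, v, z) = (a, a, b) ∨ (u, v, z) = (-a, -a, -b))
    (ha : a = 1 ∨ a = -1) (hb : b = 1 ∨ b = -1) (hc : W2 a a b = c) (hc' : W2 (-a) (-a) (-b) = c) :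
    {p : ℂ × ℂ × ℂ | p.1 ≠ 0 ∧ p.2.1 ≠ 0 ∧ p.2.2 ≠ 0 ∧
        IsCritW2 p.1 p.2.1 p.2.2 ∧ W2 p.1 p.2.1 p.2.2 = c} =
      {(a, a, b), (-a, -a, -b)} := by
  have ha0 : a ≠ 0 := by rcases ha with h | h <;> simp [h]
  have hb0 : b ≠ 0 := by rcases hb with h | h <;> simp [h]
  have ha' : -a = 1 ∨ -a = -1 := by rcases ha with h | h <;> simp [h]
  have hb' : -b = 1 ∨ -b = -1 := by rcases hb with h | h <;> simp [h]
  ext ⟨u, v, z⟩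
  simp only [Set.mem_setOf_eq, Set.mem_insert_iff, Set.mem_singleton_iff, Prod.mk.injEq]
  constructor
  · rintro ⟨hu, hv, hz, ⟨d1, d2, d3⟩, hw⟩
    rw [derivW2_u _ _ hu] at d1
    rw [derivW2_v _ _ hv] at d2
    rw [derivW2_z _ _ hz] at d3
    have hA : z + z⁻¹ ≠ 0 := by
      intro h; rw [W2, h, zero_mul] at hw
      rw [← hw] at hc
      rw [W2] at hc
      rcases ha with h | h <;> rcases hb with h' | h' <;> simp [h, h'] at hc <;> norm_num at hc
    have hB : u + u⁻¹ + v + v⁻¹ ≠ 0 := by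
      intro h; rw [W2, h, mul_zero] at hw
      rw [← hw] at hc
      rw [W2] at hc
      rcases ha with h | h <;> rcases hb with h' | h' <;> simp [h, h'] at hc <;> norm_num at hc
    have hu2 : u ^ 2 = 1 := by
      have h1 := (mul_eq_zero.mp d1).resolve_left hA
      have h2 : (u ^ 2)⁻¹ = 1 := by linear_combination -h1
      exact inv_eq_one.mp h2
    have hv2 : v ^ 2 = 1 := by
      have h1 := (mul_eq_zero.mp d2).resolve_left hA
      have h2 : (v ^ 2)⁻¹ = 1 := by linear_combination -h1
      exact inv_eq_one.mp h2
    have hz2 : z ^ 2 = 1 := by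
      have h1 := (mul_eq_zero.mp d3).resolve_right hB
      have h2 : (z ^ 2)⁻¹ = 1 := by linear_combination -h1
      exact inv_eq_one.mp h2
    rcases hab u v z (sq_one_cases hu2) (sq_one_cases hv2) (sq_one_cases hz2) hw with h | h
    · left; simpa [Prod.ext_iff] using h
    · right; simpa [Prod.ext_iff] using h
  · rintro (⟨rfl, rfl, rfl⟩ | ⟨rfl, rfl, rfl⟩)
    · exact ⟨ha0, ha0, hb0, (crit_of_pm _ _ ha hb).1, hc⟩
    · exact ⟨neg_ne_zero.mpr ha0, neg_ne_zero.mpr ha0, neg_ne_zero.mpr hb0,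
        (crit_of_pm (-a) (-b) ha' hb').1, hc'⟩

/-- Dimensions of the critical loci in genus 2: a 1-dimensional family over the
critical value `0`, and exactly two points over each of the values `8` and `-8`. -/
theorem genus_two_critical_loci :
    (∀ u z : ℂ, u ≠ 0 → z^2 = -1 →
      IsCritW2 u (-u) z ∧ W2 u (-u) z = 0) ∧
    (∀ ε δ : ℂ, (ε = 1 ∨ ε = -1) → (δ = 1 ∨ δ = -1) →
      IsCritW2 ε ε δ ∧ W2 ε ε δ = 8 * ε * δ) ∧
    {p : ℂ × ℂ × ℂ | p.1 ≠ 0 ∧ p.2.1 ≠ 0 ∧ p.2.2 ≠ 0 ∧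
        IsCritW2 p.1 p.2.1 p.2.2 ∧ W2 p.1 p.2.1 p.2.2 = 8} =
      {(1, 1, 1), (-1, -1, -1)} ∧
    {p : ℂ × ℂ × ℂ | p.1 ≠ 0 ∧ p.2.1 ≠ 0 ∧ p.2.2 ≠ 0 ∧
        IsCritW2 p.1 p.2.1 p.2.2 ∧ W2 p.1 p.2.1 p.2.2 = -8} =
      {(1, 1, -1), (-1, -1, 1)} := by
  refine ⟨?_, crit_of_pm, ?_, ?_⟩
  · intro u z hu hz2
    have hz : z ≠ 0 := by
      intro h; rw [h] at hz2; norm_num at hz2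
    have hA : z + z⁻¹ = 0 := by
      field_simp
      linear_combination hz2
    have hB : u + u⁻¹ + -u + (-u)⁻¹ = 0 := by
      rw [inv_neg]; ring
    refine ⟨⟨?_, ?_, ?_⟩, ?_⟩
    · rw [derivW2_u _ _ hu, hA, zero_mul]
    · rw [derivW2_v _ _ (neg_ne_zero.mpr hu), hA, zero_mul]
    · rw [derivW2_z _ _ hz, hB, mul_zero]
    · rw [W2, hA, zero_mul]
  · have := locus_eq 8 1 1 ?_ (Or.inl rfl) (Or.inl rfl) (by norm_num [W2]) (by norm_num [W2])
    · simpa using this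
    · intro u v z hu hv hz hw
      rcases hu with rfl | rfl <;> rcases hv with rfl | rfl <;> rcases hz with rfl | rfl <;>
        (revert hw; norm_num [W2])
  · have := locus_eq (-8) 1 (-1) ?_ (Or.inl rfl) (Or.inr rfl) (by norm_num [W2]) (by norm_num [W2])
    · simpa using this
    · intro u v z hu hv hz hw
      rcases hu with rfl | rfl <;> rcases hv with rfl | rfl <;> rcases hz with rfl | rfl <;>
        (revert hw; norm_num [W2])
end
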